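/- arXiv:math/0604369 — 4 statements merged into one kernel-verified Lean document; each statement's English description precedes it below -/
import Mathlib

section
/- Let U, V be compact convex subsets of ℝⁿ, ℝᵐ and let (α,β) ∈ U × V satisfy dist(α, ∂U) ≥ ρ₁ and dist(β, ∂V) ≥ ρ₂. If φ : U × V → ℝⁿ × ℝᵐ is continuous with ‖φ₁(x,y) − x‖ ≤ ρ₁ and ‖φ₂(x,y) − y‖ ≤ ρ₂ on U × V, then the map Φ(x,y) := (x,y) − φ(x,y) + (α,β) maps U × V into itself. -/
open Metric Set

lemma aux_mem {E : Type*} [NormedAddCommGroup E] [NormedSpace ℝ E] {U : Set E}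
    (hU : IsClosed U) {α : E} (hα : α ∈ U) {ρ : ℝ}
    (hρ : ρ ≤ infDist α (frontier U)) {v : E} (hv : ‖v‖ ≤ ρ) : α + v ∈ U := by
  by_contra hz
  set z := α + v with hzdef
  have hvne : ‖v‖ ≠ 0 := by
    intro h
    apply hz
    have hv0 : v = 0 := norm_eq_zero.mp h
    rw [hzdef, hv0, add_zero]
    exact hα
  have hvpos : 0 < ‖v‖ := lt_of_le_of_ne (norm_nonneg v) (Ne.symm hvne)
  have hρpos : 0 < ρ := lt_of_lt_of_le hvpos hv
  have hconn : IsPreconnected (segment ℝ α z) := (convex_segment α z).isPreconnected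
  have h1 : (segment ℝ α z ∩ U).Nonempty := ⟨α, left_mem_segment ℝ α z, hα⟩
  have h2 : (segment ℝ α z \ U).Nonempty := ⟨z, right_mem_segment ℝ α z, hz⟩
  have hcross : (segment ℝ α z ∩ frontier U).Nonempty := by
    by_contra hemp
    rw [not_nonempty_iff_eq_empty] at hemp
    have hmemint : ∀ x ∈ segment ℝ α z, x ∈ U → x ∈ interior U := by
      intro x hx hxU
      by_contra hni
      have hxf : x ∈ frontier U := ⟨subset_closure hxU, hni⟩
      have : x ∈ segment ℝ α z ∩ frontier U := ⟨hx, hxf⟩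
      rw [hemp] at this
      exact this
    have hsub : segment ℝ α z ⊆ interior U ∪ Uᶜ := by
      intro x hx
      by_cases hxU : x ∈ U
      · exact Or.inl (hmemint x hx hxU)
      · exact Or.inr hxU
    obtain ⟨w, -, hw1, hw2⟩ := hconn (interior U) Uᶜ isOpen_interior hU.isOpen_compl hsub
      ⟨α, left_mem_segment ℝ α z, hmemint α (left_mem_segment ℝ α z) hα⟩
      ⟨z, right_mem_segment ℝ α z, hz⟩
    exact hw2 (interior_subset hw1)
  obtain ⟨w, hwseg, hwf⟩ := hcross
  obtain ⟨a, b, ha, hb, hab, rfl⟩ := hwseg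
  have hdist : dist α (a • α + b • z) = b * ‖v‖ := by
    have : a • α + b • z - α = b • v := by
      have ha1 : a = 1 - b := by linarith
      rw [ha1, hzdef]
      module
    rw [dist_eq_norm, ← neg_sub, norm_neg, this, norm_smul, Real.norm_of_nonneg hb]
  have hle : ρ ≤ b * ‖v‖ := by
    calc ρ ≤ infDist α (frontier U) := hρ
    _ ≤ dist α (a • α + b • z) := infDist_le_dist_of_mem hwf
    _ = b * ‖v‖ := hdist
  have hb1 : 1 ≤ b := by
    by_contra h
    push_neg at h
    nlinarith
  have hbeq : b = 1 := le_antisymm (by linarith) hb1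
  have ha0 : a = 0 := by linarith
  apply hz
  have : a • α + b • z = z := by rw [hbeq, ha0]; simp
  rw [← this]
  exact hU.frontier_subset hwf

theorem stmt1 {n m : ℕ}
    (U : Set (EuclideanSpace ℝ (Fin n))) (V : Set (EuclideanSpace ℝ (Fin m)))
    (hUc : IsCompact U) (hUconv : Convex ℝ U)
    (hVc : IsCompact V) (hVconv : Convex ℝ V)
    (φ₁ : EuclideanSpace ℝ (Fin n) × EuclideanSpace ℝ (Fin m) → EuclideanSpace ℝ (Fin n))
    (φ₂ : EuclideanSpace ℝ (Fin n) × EuclideanSpace ℝ (Fin m) → EuclideanSpace ℝ (Fin m))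
    (hcont : ContinuousOn (fun p => (φ₁ p, φ₂ p)) (U ×ˢ V))
    (ρ₁ ρ₂ : ℝ)
    (hb1 : ∀ p ∈ U ×ˢ V, ‖φ₁ p - p.1‖ ≤ ρ₁)
    (hb2 : ∀ p ∈ U ×ˢ V, ‖φ₂ p - p.2‖ ≤ ρ₂)
    (α : EuclideanSpace ℝ (Fin n)) (β : EuclideanSpace ℝ (Fin m))
    (hα : α ∈ U) (hβ : β ∈ V)
    (hdα : ρ₁ ≤ infDist α (frontier U)) (hdβ : ρ₂ ≤ infDist β (frontier V)) :
    ∀ p ∈ U ×ˢ V, (p.1 - φ₁ p + α, p.2 - φ₂ p + β) ∈ U ×ˢ V := by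
  intro p hp
  constructor
  · have h1 : p.1 - φ₁ p + α = α + (p.1 - φ₁ p) := by abel
    rw [h1]
    exact aux_mem hUc.isClosed hα hdα (by rw [← norm_neg]; simpa using hb1 p hp)
  · have h2 : p.2 - φ₂ p + β = β + (p.2 - φ₂ p) := by abel
    rw [h2]
    exact aux_mem hVc.isClosed hβ hdβ (by rw [← norm_neg]; simpa using hb2 p hp)
end

section
/- Let A be an m × m real matrix all of whose eigenvalues have negative real part. Then there exist constants C > 0 and β < 0 such that ‖e^{At}‖ ≤ C e^{βt} for all t ≥ 0. -/
open scoped Matrix ENNReal NNReal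
open NormedSpace Filter

attribute [local instance] Matrix.linftyOpNormedAddCommGroup Matrix.linftyOpNormedRing
  Matrix.linftyOpNormedAlgebra

lemma exp_mulVec {m : ℕ} (B : Matrix (Fin m) (Fin m) ℂ) (v : Fin m → ℂ) (c : ℂ)
    (hv : B.mulVec v = c • v) :
    (exp B).mulVec v = Complex.exp c • v := by
  classical
  have hpow : ∀ n : ℕ, (B ^ n).mulVec v = c ^ n • v := by
    intro n
    induction n with
    | zero => simp [Matrix.one_mulVec]
    | succ n ih =>
        rw [pow_succ, ← Matrix.mulVec_mulVec, hv, Matrix.mulVec_smul, ih, smul_comm, pow_succ']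
        module
  let L : Matrix (Fin m) (Fin m) ℂ →ₗ[ℂ] (Fin m → ℂ) :=
    { toFun := fun M => M.mulVec v
      map_add' := fun M N => Matrix.add_mulVec M N v
      map_smul' := fun r M => (Matrix.smul_mulVec r M v) }
  let L' : Matrix (Fin m) (Fin m) ℂ →L[ℂ] (Fin m → ℂ) := L.toContinuousLinearMap
  have hsum : Summable fun n : ℕ => ((n.factorial : ℂ))⁻¹ • B ^ n := expSeries_summable' B
  have h1 : (exp B).mulVec v = ∑' n : ℕ, ((n.factorial : ℂ))⁻¹ • (B ^ n).mulVec v := by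
    have := (L'.map_tsum hsum).symm
    simpa [L', L, exp_eq_tsum ℂ, Matrix.smul_mulVec] using this.symm
  rw [h1]
  have h2 : ∀ n : ℕ, ((n.factorial : ℂ))⁻¹ • (B ^ n).mulVec v
      = (((n.factorial : ℂ))⁻¹ * c ^ n) • v := by
    intro n; rw [hpow, smul_smul]
  simp_rw [h2]
  rw [Summable.tsum_smul_const]
  · congr 1
    rw [Complex.exp_eq_exp_ℂ, exp_eq_tsum ℂ]
    simp [smul_eq_mul]
  · have := expSeries_summable' (𝕂 := ℂ) c
    simpa [smul_eq_mul] using this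

lemma spec_exp {m : ℕ} (B : Matrix (Fin m) (Fin m) ℂ) {μ : ℂ}
    (hμ : μ ∈ spectrum ℂ (exp B)) :
    ∃ c ∈ spectrum ℂ B, μ = Complex.exp c := by
  classical
  set f : Module.End ℂ (Fin m → ℂ) := Matrix.toLinAlgEquiv' B with hf
  set g : Module.End ℂ (Fin m → ℂ) := Matrix.toLinAlgEquiv' (exp B) with hg
  have hμg : μ ∈ spectrum ℂ g := by
    rwa [hg, AlgEquiv.spectrum_eq]
  have heig : g.HasEigenvalue μ := Module.End.hasEigenvalue_iff_mem_spectrum.mpr hμg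
  set W : Submodule ℂ (Fin m → ℂ) := g.eigenspace μ with hW
  have hWne : W ≠ ⊥ := heig
  have hcomm : Commute B (exp B) := (Commute.refl B).exp_right
  have hinv : ∀ x ∈ W, f x ∈ W := by
    intro x hx
    rw [hW, Module.End.mem_eigenspace_iff] at hx ⊢
    simp only [hf, hg, Matrix.toLinAlgEquiv'_apply] at hx ⊢
    rw [Matrix.mulVec_mulVec, ← hcomm.eq, ← Matrix.mulVec_mulVec, hx, Matrix.mulVec_smul]
  haveI : Nontrivial W := Submodule.nontrivial_iff_ne_bot.mpr hWne
  obtain ⟨c, hc⟩ := Module.End.exists_eigenvalue (f.restrict hinv)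
  obtain ⟨w, hw, hw0⟩ := hc.exists_hasEigenvector
  have hwv : f w.val = c • w.val := by
    have := congrArg Subtype.val (Module.End.mem_eigenspace_iff.mp hw)
    simpa [LinearMap.restrict_apply] using this
  have hBw : B.mulVec w.val = c • w.val := by
    simpa [hf, Matrix.toLinAlgEquiv'_apply] using hwv
  have hvne : (w.val : Fin m → ℂ) ≠ 0 := by
    simpa [Submodule.coe_eq_zero] using hw0
  have hEw : (exp B).mulVec w.val = μ • w.val := by
    have := Module.End.mem_eigenspace_iff.mp w.2
    simpa [hg, Matrix.toLinAlgEquiv'_apply] using this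
  have hEw' := exp_mulVec B w.val c hBw
  have hme : μ = Complex.exp c := by
    have h : μ • (w.val : Fin m → ℂ) = Complex.exp c • w.val := hEw.symm.trans hEw'
    have h0 : (μ - Complex.exp c) • (w.val : Fin m → ℂ) = 0 := by
      rw [sub_smul, h, sub_self]
    rcases smul_eq_zero.mp h0 with h1 | h1
    · exact sub_eq_zero.mp h1
    · exact absurd h1 hvne
  refine ⟨c, ?_, hme⟩
  have h3 : f.HasEigenvalue c :=
    Module.End.hasEigenvalue_of_hasEigenvector ⟨Module.End.mem_eigenspace_iff.mpr hwv, hvne⟩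
  have h4 := Module.End.hasEigenvalue_iff_mem_spectrum.mp h3
  rwa [hf, AlgEquiv.spectrum_eq] at h4

lemma norm_map_ofReal {m : ℕ} (M : Matrix (Fin m) (Fin m) ℝ) :
    ‖M.map Complex.ofReal‖ = ‖M‖ := by
  rw [Matrix.linfty_opNorm_def, Matrix.linfty_opNorm_def]
  congr 1
  ext i
  simp [Matrix.map_apply]

lemma exp_map_ofReal {m : ℕ} (M : Matrix (Fin m) (Fin m) ℝ) :
    (exp M).map Complex.ofReal = exp (M.map Complex.ofReal) := by
  have hc : Continuous (Complex.ofRealHom.mapMatrix :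
      Matrix (Fin m) (Fin m) ℝ →+* Matrix (Fin m) (Fin m) ℂ) := by
    apply continuous_matrix
    intro i j
    exact Complex.continuous_ofReal.comp ((continuous_apply j).comp (continuous_apply i))
  have h := map_exp (Complex.ofRealHom.mapMatrix :
      Matrix (Fin m) (Fin m) ℝ →+* Matrix (Fin m) (Fin m) ℂ) hc M
  have h2 : (exp : Matrix (Fin m) (Fin m) ℂ → _) = exp := rfl
  calc (exp M).map Complex.ofReal = exp (M.map Complex.ofReal) := h
    _ = exp (M.map Complex.ofReal) := by rw [h2]

theorem stmt4 {m : ℕ} (A : Matrix (Fin m) (Fin m) ℝ)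
    (hA : ∀ μ ∈ spectrum ℂ (A.map Complex.ofReal), μ.re < 0) :
    ∃ C > 0, ∃ β < (0 : ℝ), ∀ t ≥ (0 : ℝ),
      ‖NormedSpace.exp (t • A)‖ ≤ C * Real.exp (β * t) := by
  classical
  set B : Matrix (Fin m) (Fin m) ℂ := A.map Complex.ofReal with hB
  set E : Matrix (Fin m) (Fin m) ℂ := exp B with hE
  -- every spectral value of E has norm < 1
  have hspec : ∀ μ ∈ spectrum ℂ E, ‖μ‖ < 1 := by
    intro μ hμ
    obtain ⟨c, hc, rfl⟩ := spec_exp B hμ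
    rw [Complex.norm_exp]
    have := hA c hc
    calc Real.exp c.re < Real.exp 0 := Real.exp_lt_exp.mpr this
      _ = 1 := Real.exp_zero
  -- spectral radius of E is < 1
  have hρ : spectralRadius ℂ E < 1 := by
    rcases (spectrum ℂ E).eq_empty_or_nonempty with h | h
    · unfold spectralRadius
      simp [h]
    · obtain ⟨μ₀, hμ₀, hmax⟩ :=
        (spectrum.isCompact E).exists_isMaxOn h continuous_norm.continuousOn
      have hle : spectralRadius ℂ E ≤ (‖μ₀‖₊ : ℝ≥0∞) := by
        unfold spectralRadius
        exact iSup₂_le fun μ hμ => by exact_mod_cast hmax hμ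
      refine lt_of_le_of_lt hle ?_
      have h1 : ‖μ₀‖₊ < 1 := by exact_mod_cast hspec μ₀ hμ₀
      exact_mod_cast h1
  -- choose r' strictly between the spectral radius and 1
  obtain ⟨r, hr1, hr2⟩ := ENNReal.lt_iff_exists_nnreal_btwn.mp hρ
  set r' : NNReal := max r 2⁻¹ with hr'
  have hr'0 : (0:ℝ) < (r' : ℝ) := by
    have : (2⁻¹ : NNReal) ≤ r' := le_max_right _ _
    have h2 : (0:NNReal) < 2⁻¹ := by norm_num
    exact_mod_cast lt_of_lt_of_le h2 this
  have hr'1 : (r' : ℝ) < 1 := by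
    have ha : r < 1 := by exact_mod_cast hr2
    have hb : (2⁻¹ : NNReal) < 1 := by rw [← NNReal.coe_lt_coe]; norm_num
    have : r' < 1 := max_lt ha hb
    exact_mod_cast this
  have hρr' : spectralRadius ℂ E < (r' : ℝ≥0∞) := by
    refine lt_of_lt_of_le hr1 ?_
    exact_mod_cast (le_max_left r 2⁻¹ : r ≤ r')
  -- Gelfand: eventually ‖E^n‖ ≤ r'^n
  have hev : ∀ᶠ n : ℕ in atTop, (‖E ^ n‖₊ : ℝ≥0∞) ^ (1 / (n:ℝ)) < (r' : ℝ≥0∞) :=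
    eventually_lt_of_limsup_lt
      (lt_of_le_of_lt (spectrum.limsup_pow_nnnorm_pow_one_div_le_spectralRadius E) hρr')
  obtain ⟨N, hN⟩ := eventually_atTop.mp hev
  have hpowb : ∀ n : ℕ, N + 1 ≤ n → ‖E ^ n‖ ≤ (r' : ℝ) ^ n := by
    intro n hn
    have hn0 : (0:ℝ) < n := by
      have : 1 ≤ n := le_trans (Nat.le_add_left 1 N) hn
      exact_mod_cast this
    have h := (hN n (le_trans (Nat.le_succ N) hn)).le
    have h1 := ENNReal.rpow_le_rpow h (le_of_lt hn0)
    rw [← ENNReal.rpow_mul, one_div, inv_mul_cancel₀ (ne_of_gt hn0), ENNReal.rpow_one,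
      ENNReal.rpow_natCast] at h1
    have h2 : ‖E ^ n‖₊ ≤ r' ^ n := by exact_mod_cast h1
    exact_mod_cast h2
  -- a uniform constant K
  set K : ℝ := 1 + ∑ k ∈ Finset.range (N + 1), ‖E ^ k‖ / (r' : ℝ) ^ k with hK
  have hsumnn : ∀ k ∈ Finset.range (N + 1), 0 ≤ ‖E ^ k‖ / (r' : ℝ) ^ k := by
    intro k _
    positivity
  have hK1 : (1:ℝ) ≤ K := by
    rw [hK]
    have := Finset.sum_nonneg hsumnn
    linarith
  have hKb : ∀ n : ℕ, ‖E ^ n‖ ≤ K * (r' : ℝ) ^ n := by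
    intro n
    rcases le_or_gt (N + 1) n with h | h
    · calc ‖E ^ n‖ ≤ (r' : ℝ) ^ n := hpowb n h
        _ = 1 * (r' : ℝ) ^ n := (one_mul _).symm
        _ ≤ K * (r' : ℝ) ^ n := by
            have : (0:ℝ) < (r' : ℝ) ^ n := by positivity
            nlinarith
    · have hmem : n ∈ Finset.range (N + 1) := Finset.mem_range.mpr h
      have hle : ‖E ^ n‖ / (r' : ℝ) ^ n ≤ K := by
        have := Finset.single_le_sum hsumnn hmem
        linarith
      have hpos : (0:ℝ) < (r' : ℝ) ^ n := by positivity
      calc ‖E ^ n‖ = (‖E ^ n‖ / (r' : ℝ) ^ n) * (r' : ℝ) ^ n := by field_simp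
        _ ≤ K * (r' : ℝ) ^ n := by nlinarith
  -- bound on [0,1]
  have hcont : Continuous fun s : ℝ => ‖exp (s • B)‖ :=
    (exp_continuous.comp (continuous_id.smul continuous_const)).norm
  obtain ⟨s₀, hs₀mem, hs₀⟩ := (isCompact_Icc (a := (0:ℝ)) (b := 1)).exists_isMaxOn
    ⟨0, by norm_num⟩ hcont.continuousOn
  set M : ℝ := ‖exp (s₀ • B)‖ with hM
  have hM0 : 0 ≤ M := norm_nonneg _
  -- the decay rate
  set β : ℝ := Real.log (r' : ℝ) with hβ
  have hβ0 : β < 0 := Real.log_neg hr'0 hr'1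
  have hrβ : ∀ n : ℕ, (r' : ℝ) ^ n = Real.exp (β * n) := by
    intro n
    rw [mul_comm, Real.exp_nat_mul, Real.exp_log hr'0]
  have hKpos : (0:ℝ) < K := lt_of_lt_of_le zero_lt_one hK1
  have hCpos : (0:ℝ) < K * (M + 1) * Real.exp (-β) :=
    mul_pos (mul_pos hKpos (by linarith)) (Real.exp_pos _)
  refine ⟨K * (M + 1) * Real.exp (-β), hCpos, β, hβ0, ?_⟩
  intro t ht
  set n : ℕ := ⌊t⌋₊ with hn
  set s : ℝ := t - n with hs
  have hs0 : 0 ≤ s := sub_nonneg.mpr (Nat.floor_le ht)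
  have hs1 : s ≤ 1 := by
    have := Nat.lt_floor_add_one t
    simp only [hs]
    linarith
  have hts : t = (n : ℝ) + s := by rw [hs]; ring
  -- norm transfer to ℂ
  have htrans : ‖exp (t • A)‖ = ‖exp (t • B)‖ := by
    rw [← norm_map_ofReal, exp_map_ofReal]
    congr 2
    ext i j
    simp [hB, Matrix.map_apply, Complex.ofReal_mul, Complex.real_smul]
  -- splitting
  have hsplit : exp (t • B) = E ^ n * exp (s • B) := by
    have h1 : t • B = (n : ℝ) • B + s • B := by rw [← add_smul, ← hts]
    have h2 : Commute ((n : ℝ) • B) (s • B) :=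
      ((Commute.refl B).smul_left ((n : ℝ))).smul_right s
    rw [h1, Matrix.exp_add_of_commute _ _ h2, Nat.cast_smul_eq_nsmul ℝ n B, Matrix.exp_nsmul]
  have hmain : ‖exp (t • B)‖ ≤ K * (r' : ℝ) ^ n * M := by
    rw [hsplit]
    calc ‖E ^ n * exp (s • B)‖ ≤ ‖E ^ n‖ * ‖exp (s • B)‖ := norm_mul_le _ _
      _ ≤ (K * (r' : ℝ) ^ n) * M := by
          have h1 := hKb n
          have h2 : ‖exp (s • B)‖ ≤ M := hs₀ ⟨hs0, hs1⟩
          have h3 : (0:ℝ) ≤ ‖exp (s • B)‖ := norm_nonneg _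
          nlinarith [norm_nonneg (E ^ n)]
  rw [htrans]
  refine le_trans hmain ?_
  rw [hrβ n]
  have hexp : Real.exp (β * n) ≤ Real.exp (-β) * Real.exp (β * t) := by
    rw [← Real.exp_add]
    apply Real.exp_le_exp.mpr
    have hnt : t - 1 ≤ (n : ℝ) := by
      have := Nat.lt_floor_add_one t
      simp only [hn]
      linarith
    nlinarith
  calc K * Real.exp (β * n) * M
      ≤ K * (Real.exp (-β) * Real.exp (β * t)) * (M + 1) := by
        have e1 := mul_le_mul_of_nonneg_right (mul_le_mul_of_nonneg_left hexp hKpos.le) hM0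
        have e2 : K * (Real.exp (-β) * Real.exp (β * t)) * M
            ≤ K * (Real.exp (-β) * Real.exp (β * t)) * (M + 1) :=
          mul_le_mul_of_nonneg_left (by linarith)
            (mul_nonneg hKpos.le (mul_nonneg (Real.exp_pos _).le (Real.exp_pos _).le))
        linarith
    _ = K * (M + 1) * Real.exp (-β) * Real.exp (β * t) := by ring

-- #print axioms check
end

section
/- Let β : ℝⁿ → ℝ be continuous with ∂β/∂xₖ < 0 for all k ≠ i (for fixed i), and suppose lim_{x₁→+∞,…,xₙ→+∞} β(x) = +∞ and lim_{x₁→−∞,…,xₙ→−∞} β(x) = −∞. Then lim_{u→+∞} min_{x ∈ Sᵢ(u)} β(x) = +∞ and lim_{u→−∞} max_{x ∈ Sᵢ(u)} β(x) = −∞, where Sᵢ(u) = {x ∈ ℝⁿ : xᵢ = u}. -/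
open Filter

private lemma coord_anti {n : ℕ} (β : (Fin n → ℝ) → ℝ) (i : Fin n)
    (hβ : ContDiff ℝ 1 β)
    (hdec : ∀ x : Fin n → ℝ, ∀ k : Fin n, k ≠ i → fderiv ℝ β x (Pi.single k 1) < 0)
    (k : Fin n) (hk : k ≠ i) (y : Fin n → ℝ) :
    StrictAnti (fun t => β (Function.update y k t)) := by
  have hrw : ∀ t : ℝ, Function.update y k t = y + (t - y k) • (Pi.single k (1:ℝ) : Fin n → ℝ) := by
    intro t; funext j
    by_cases h : j = k
    · subst h; simp
    · simp [Function.update_of_ne h, Pi.single_apply, h]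
  have : StrictAnti (fun t => β (y + (t - y k) • (Pi.single k (1:ℝ) : Fin n → ℝ))) := by
    apply strictAnti_of_deriv_neg
    intro t
    have h1 : HasDerivAt (fun t : ℝ => y + (t - y k) • (Pi.single k (1:ℝ) : Fin n → ℝ))
        (Pi.single k (1:ℝ) : Fin n → ℝ) t := by
      simpa using (((hasDerivAt_id t).sub_const (y k)).smul_const
        (Pi.single k (1:ℝ) : Fin n → ℝ)).const_add y
    have h2 := ((hβ.differentiable one_ne_zero).differentiableAt.hasFDerivAt).comp_hasDerivAt t h1
    rw [show (fun t : ℝ => β (y + (t - y k) • (Pi.single k (1:ℝ) : Fin n → ℝ))) =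
        β ∘ (fun t : ℝ => y + (t - y k) • (Pi.single k (1:ℝ) : Fin n → ℝ)) from rfl, h2.deriv]
    exact hdec _ k hk
  intro s t hst
  simpa only [hrw] using this hst

private lemma key_anti {n : ℕ} (β : (Fin n → ℝ) → ℝ) (i : Fin n)
    (hβ : ContDiff ℝ 1 β)
    (hdec : ∀ x : Fin n → ℝ, ∀ k : Fin n, k ≠ i → fderiv ℝ β x (Pi.single k 1) < 0) :
    ∀ s : Finset (Fin n), ∀ x y : Fin n → ℝ, x ≤ y →
      (∀ k, k ≠ i → k ∉ s → x k = y k) → x i = y i → β y ≤ β x := by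
  intro s
  induction s using Finset.induction with
  | empty =>
    intro x y _ heq hi
    have : x = y := by
      funext j
      by_cases h : j = i
      · subst h; exact hi
      · exact heq j h (Finset.notMem_empty j)
    rw [this]
  | @insert k s hk ih =>
    intro x y hxy heq hi
    by_cases hki : k = i
    · subst hki
      exact ih x y hxy (fun k' hk' hk's => heq k' hk'
        (by simp [Finset.mem_insert, hk's, hk'])) hi
    · set z := Function.update y k (x k) with hz
      have h1 : β y ≤ β z := by
        have := (coord_anti β i hβ hdec k hki y).antitone (hxy k)
        simpa [Function.update_eq_self] using this
      have h2 : β z ≤ β x := by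
        apply ih x z
        · intro j
          by_cases h : j = k
          · subst h; simp [hz]
          · simp only [hz, Function.update_of_ne h]; exact hxy j
        · intro k' hk' hk's
          by_cases h : k' = k
          · subst h; simp [hz]
          · rw [hz, Function.update_of_ne h]
            exact heq k' hk' (by simp [Finset.mem_insert, h, hk's])
        · simp only [hz, Function.update_of_ne (Ne.symm hki)]; exact hi
      exact h1.trans h2

theorem stmt9 {n : ℕ} (β : (Fin n → ℝ) → ℝ) (i : Fin n)
    (hβ : ContDiff ℝ 1 β)
    (hdec : ∀ x : Fin n → ℝ, ∀ k : Fin n, k ≠ i → fderiv ℝ β x (Pi.single k 1) < 0)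
    (htop : Tendsto β atTop atTop)
    (hbot : Tendsto β atBot atBot) :
    Tendsto (fun u : ℝ => sInf (β '' {x : Fin n → ℝ | x i = u})) atTop atTop ∧
    Tendsto (fun u : ℝ => sSup (β '' {x : Fin n → ℝ | x i = u})) atBot atBot := by
  have key := key_anti β i hβ hdec Finset.univ
  constructor
  · rw [tendsto_atTop_atTop]
    intro M
    obtain ⟨a, ha⟩ := tendsto_atTop_atTop.mp htop M
    refine ⟨a i, fun u hu => ?_⟩
    have hne : (β '' {x : Fin n → ℝ | x i = u}).Nonempty :=
      ⟨β (fun _ => u), ⟨fun _ => u, rfl, rfl⟩⟩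
    apply le_csInf hne
    rintro b ⟨x, hx, rfl⟩
    have hxi : x i = u := hx
    set y := x ⊔ a with hy
    have h1 : M ≤ β y := ha y (le_sup_right)
    have h2 : β y ≤ β x := by
      apply key x y le_sup_left (fun k _ hks => absurd (Finset.mem_univ k) hks)
      simp [hy, hxi, sup_eq_left.mpr hu]
    exact h1.trans h2
  · rw [tendsto_atBot_atBot]
    intro M
    obtain ⟨a, ha⟩ := tendsto_atBot_atBot.mp hbot M
    refine ⟨a i, fun u hu => ?_⟩
    have hne : (β '' {x : Fin n → ℝ | x i = u}).Nonempty :=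
      ⟨β (fun _ => u), ⟨fun _ => u, rfl, rfl⟩⟩
    apply csSup_le hne
    rintro b ⟨x, hx, rfl⟩
    have hxi : x i = u := hx
    set y := x ⊓ a with hy
    have h1 : β y ≤ M := ha y (inf_le_right)
    have h2 : β x ≤ β y := by
      apply key y x inf_le_left (fun k _ hks => absurd (Finset.mem_univ k) hks)
      simp [hy, hxi, inf_eq_left.mpr hu]
    exact h1.trans' h2
end

section
/- Let F : ℝⁿ → ℝⁿ be C¹ on an open set V with ∂Fᵢ/∂xⱼ(z) ≥ 0 for all z ∈ V and all i ≠ j, and suppose the Jacobian matrix DF(z) is irreducible for every z ∈ V. Then the flow φₜ of ż = F(z) has eventually positive derivatives on any compact invariant subset of V: there exists t₀ > 0 such that all entries of the derivative matrix Dφₜ(z) are strictly positive for t ≥ t₀. -/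
set_option linter.unusedSectionVars false

open intervalIntegral Metric Set Filter Finset

section PB
variable {E : Type*} [NormedAddCommGroup E] [NormedSpace ℝ E] [FiniteDimensional ℝ E]

noncomputable def pbSeq (A : ℝ → E →L[ℝ] E) : ℕ → ℝ → (E →L[ℝ] E)
  | 0 => fun _ => ContinuousLinearMap.id ℝ E
  | (k+1) => fun s => ∫ τ in (0:ℝ)..s, (A τ).comp (pbSeq A k τ)

noncomputable def pb (A : ℝ → E →L[ℝ] E) (s : ℝ) : E →L[ℝ] E := ∑' k, pbSeq A k s

variable {A : ℝ → E →L[ℝ] E} {L : ℝ} (hA : Continuous A) (hL : ∀ s, ‖A s‖ ≤ L)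

include hA in
lemma pbSeq_cont (k : ℕ) : Continuous (pbSeq A k) := by
  induction k with
  | zero => exact continuous_const
  | succ k ih =>
    exact intervalIntegral.continuous_primitive
      (fun a b => (hA.clm_comp ih).intervalIntegrable a b) 0

lemma hL0 (hL : ∀ s, ‖A s‖ ≤ L) : 0 ≤ L := le_trans (norm_nonneg _) (hL 0)

lemma abs_integral_abs_pow (k : ℕ) (s : ℝ) :
    |∫ τ in (0:ℝ)..s, |τ|^k| = |s|^(k+1) / (k+1) := by
  rcases le_or_gt 0 s with hs | hs
  · rw [intervalIntegral.integral_congr (g := fun τ => τ ^ k)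
      (by intro τ hτ; rw [uIcc_of_le hs] at hτ; simp [abs_of_nonneg hτ.1]),
      integral_pow]
    have h0 : ((0:ℝ))^(k+1) = 0 := zero_pow (Nat.succ_ne_zero k)
    rw [h0, sub_zero, abs_of_nonneg hs,
      abs_of_nonneg (div_nonneg (pow_nonneg hs _) (by positivity))]
  · rw [intervalIntegral.integral_congr (g := fun τ => (-τ) ^ k)
      (by intro τ hτ; rw [uIcc_of_ge hs.le] at hτ; simp [abs_of_nonpos hτ.2])]
    have h2 : ∫ τ in (0:ℝ)..s, (-τ)^k = ∫ τ in (-s)..(-(0:ℝ)), (τ:ℝ)^k := by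
      rw [← intervalIntegral.integral_comp_neg fun τ => τ ^ k]
    have hns : (0:ℝ) ≤ -s := by linarith
    rw [h2, neg_zero, integral_pow, abs_of_neg hs]
    have h0 : ((0:ℝ))^(k+1) = 0 := zero_pow (Nat.succ_ne_zero k)
    rw [h0, zero_sub, abs_div, abs_neg, abs_of_nonneg (pow_nonneg hns _),
      abs_of_pos (by positivity : (0:ℝ) < (k:ℝ)+1)]
  
include hA hL in
lemma pbSeq_norm_le (k : ℕ) (s : ℝ) :
    ‖pbSeq A k s‖ ≤ (L * |s|)^k / (Nat.factorial k) := by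
  induction k generalizing s with
  | zero => simpa [pbSeq] using ContinuousLinearMap.norm_id_le
  | succ k ih =>
    have hbd : ∀ τ, ‖(A τ).comp (pbSeq A k τ)‖ ≤ (L^(k+1) / (Nat.factorial k)) * |τ|^k := by
      intro τ
      calc ‖(A τ).comp (pbSeq A k τ)‖ ≤ ‖A τ‖ * ‖pbSeq A k τ‖ :=
            ContinuousLinearMap.opNorm_comp_le _ _
        _ ≤ L * ((L * |τ|)^k / (Nat.factorial k)) :=
            mul_le_mul (hL τ) (ih τ) (norm_nonneg _) (hL0 hL)
        _ = (L^(k+1) / (Nat.factorial k)) * |τ|^k := by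
            rw [mul_pow]; ring
    have h1 : ‖pbSeq A (k+1) s‖ ≤ |∫ τ in (0:ℝ)..s, (L^(k+1) / (Nat.factorial k)) * |τ|^k| := by
      apply intervalIntegral.norm_integral_le_abs_of_norm_le
      · filter_upwards with τ using hbd τ
      · exact Continuous.intervalIntegrable (by fun_prop) 0 s
    have hfac : (0:ℝ) < Nat.factorial k := by positivity
    calc ‖pbSeq A (k+1) s‖ ≤ |∫ τ in (0:ℝ)..s, (L^(k+1) / (Nat.factorial k)) * |τ|^k| := h1
      _ = (L^(k+1) / (Nat.factorial k)) * |∫ τ in (0:ℝ)..s, |τ|^k| := by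
          rw [intervalIntegral.integral_const_mul, abs_mul,
            abs_of_nonneg (div_nonneg (pow_nonneg (hL0 hL) _) hfac.le)]
      _ = (L * |s|)^(k+1) / (Nat.factorial (k+1)) := by
          rw [abs_integral_abs_pow, mul_pow, Nat.factorial_succ, div_mul_div_comm]
          push_cast
          ring

include hA in
lemma pbSeq_hasDerivAt (k : ℕ) (s : ℝ) :
    HasDerivAt (pbSeq A (k+1)) ((A s).comp (pbSeq A k s)) s := by
  have hc : Continuous fun τ => (A τ).comp (pbSeq A k τ) := hA.clm_comp (pbSeq_cont hA k)
  exact intervalIntegral.integral_hasDerivAt_right (hc.intervalIntegrable 0 s)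
    (hc.stronglyMeasurableAtFilter _ _) hc.continuousAt

include hA hL in
lemma pbSeq_summable (s : ℝ) : Summable (fun k => pbSeq A k s) := by
  apply Summable.of_norm_bounded (Real.summable_pow_div_factorial (L * |s|))
  exact fun k => pbSeq_norm_le hA hL k s

include hA hL in
lemma pb_sub_partial_le (N : ℕ) {R : ℝ} {s : ℝ} (hs : |s| ≤ R) :
    ‖pb A s - ∑ k ∈ Finset.range N, pbSeq A k s‖ ≤ ∑' k, (L*R)^(k+N) / (Nat.factorial (k+N)) := by
  have hsum := pbSeq_summable hA hL (s := s)
  have htail : pb A s - ∑ k ∈ Finset.range N, pbSeq A k s = ∑' k, pbSeq A (k + N) s := by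
    rw [pb, ← Summable.sum_add_tsum_nat_add N hsum, add_sub_cancel_left]
  rw [htail]
  have hb : ∀ k, ‖pbSeq A (k+N) s‖ ≤ (L*R)^(k+N) / (Nat.factorial (k+N)) := by
    intro k
    refine (pbSeq_norm_le hA hL (k+N) s).trans ?_
    have hnum : (L*|s|)^(k+N) ≤ (L*R)^(k+N) :=
      pow_le_pow_left₀ (mul_nonneg (hL0 hL) (abs_nonneg _))
        (mul_le_mul_of_nonneg_left hs (hL0 hL)) _
    exact div_le_div_of_nonneg_right hnum (by positivity)
  have hsumb : Summable (fun k => (L*R)^(k+N) / ((Nat.factorial (k+N)):ℝ)) :=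
    (summable_nat_add_iff N).2 (Real.summable_pow_div_factorial (L*R))
  have hsum2 : Summable (fun k => ‖pbSeq A (k+N) s‖) :=
    Summable.of_nonneg_of_le (fun _ => norm_nonneg _) hb hsumb
  calc ‖∑' k, pbSeq A (k + N) s‖ ≤ ∑' k, ‖pbSeq A (k + N) s‖ :=
        norm_tsum_le_tsum_norm hsum2
    _ ≤ ∑' k, (L*R)^(k+N) / (Nat.factorial (k+N)) := Summable.tsum_le_tsum hb hsum2 hsumb

include hA hL in
lemma pb_hasDerivAt (s₀ : ℝ) : HasDerivAt (pb A) ((A s₀).comp (pb A s₀)) s₀ := by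
  set R : ℝ := |s₀| + 1 with hR
  have hs₀ : s₀ ∈ Ioo (-R) R := by
    constructor
    · nlinarith [abs_nonneg s₀, neg_abs_le s₀]
    · nlinarith [le_abs_self s₀]
  apply hasDerivAt_of_tendstoUniformlyOn (l := atTop)
    (f := fun N x => ∑ k ∈ Finset.range (N+1), pbSeq A k x)
    (f' := fun N x => (A x).comp (∑ k ∈ Finset.range N, pbSeq A k x)) isOpen_Ioo
    ?_ ?_ ?_ hs₀
  · rw [Metric.tendstoUniformlyOn_iff]
    intro ε hε
    have htail : Tendsto (fun N => L * ∑' k, (L*R)^(k+N) / (Nat.factorial (k+N))) atTop (nhds 0) := by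
      have h := tendsto_sum_nat_add (fun m => (L*R)^m / (Nat.factorial m))
      simpa using h.const_mul L
    filter_upwards [htail.eventually (eventually_lt_nhds hε)] with N hN x hx
    rw [dist_eq_norm]
    have hxR : |x| ≤ R := by
      rw [abs_le]; exact ⟨hx.1.le, hx.2.le⟩
    calc ‖(A x).comp (pb A x) - (A x).comp (∑ k ∈ Finset.range N, pbSeq A k x)‖
        = ‖(A x).comp (pb A x - ∑ k ∈ Finset.range N, pbSeq A k x)‖ := by
          rw [ContinuousLinearMap.comp_sub]
      _ ≤ ‖A x‖ * ‖pb A x - ∑ k ∈ Finset.range N, pbSeq A k x‖ :=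
          ContinuousLinearMap.opNorm_comp_le _ _
      _ ≤ L * ∑' k, (L*R)^(k+N) / (Nat.factorial (k+N)) :=
          mul_le_mul (hL x) (pb_sub_partial_le hA hL N hxR) (norm_nonneg _) (hL0 hL)
      _ < ε := hN
  · filter_upwards with N x hx
    have h : HasDerivAt (fun y => ∑ k ∈ Finset.range (N+1), pbSeq A k y)
        (∑ k ∈ Finset.range (N+1),
          (Nat.rec (0 : E →L[ℝ] E) (fun k _ => (A x).comp (pbSeq A k x)) k)) x := by
      apply HasDerivAt.fun_sum
      intro k _
      cases k with
      | zero => exact hasDerivAt_const x _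
      | succ k => exact pbSeq_hasDerivAt hA k x
    have e2 := map_sum ((ContinuousLinearMap.compL ℝ E E E) (A x)) (fun k => pbSeq A k x)
      (Finset.range N)
    simp only [ContinuousLinearMap.compL_apply] at e2
    have e : (∑ k ∈ Finset.range (N+1),
        (Nat.rec (0 : E →L[ℝ] E) (fun k _ => (A x).comp (pbSeq A k x)) k))
        = (A x).comp (∑ k ∈ Finset.range N, pbSeq A k x) := by
      rw [Finset.sum_range_succ']
      show (∑ k ∈ Finset.range N, (A x).comp (pbSeq A k x)) + 0 = _
      rw [add_zero, e2]
    rw [← e]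
    exact h
  · intro x hx
    have h := ((pbSeq_summable hA hL (s := x)).hasSum).tendsto_sum_nat
    exact h.comp (tendsto_add_atTop_nat 1)

include hA hL in
lemma pb_continuous : Continuous (pb A) :=
  continuous_iff_continuousAt.2 fun s => (pb_hasDerivAt hA hL s).continuousAt

lemma pb_zero : pb A 0 = ContinuousLinearMap.id ℝ E := by
  have h : pb A 0 = ∑' k, pbSeq A k 0 := rfl
  rw [h, tsum_eq_single 0]
  · rfl
  · intro k hk
    match k, hk with
    | (k+1), _ => simp [pbSeq]

end PB
section M2
variable {n : ℕ}

local notation "EE" => ((Fin n) → ℝ)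

lemma entry_expand (T : EE →L[ℝ] EE) (y : EE) (p : Fin n) :
    T y p = ∑ q, y q * T (Pi.single q 1) p := by
  have e : y = ∑ q, y q • (Pi.single q 1 : EE) := by
    ext j
    simp [Pi.single_apply]
  conv_lhs => rw [e]
  rw [map_sum]
  simp [Finset.sum_apply]

lemma entry_nonneg_apply {T : EE →L[ℝ] EE} (hT : ∀ p q, 0 ≤ T (Pi.single q 1) p)
    {y : EE} (hy : ∀ p, 0 ≤ y p) (p : Fin n) : 0 ≤ T y p := by
  rw [entry_expand]
  exact Finset.sum_nonneg fun q _ => mul_nonneg (hy q) (hT p q)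

lemma entry_ge_single {T : EE →L[ℝ] EE} (hT : ∀ p q, 0 ≤ T (Pi.single q 1) p)
    {y : EE} (hy : ∀ p, 0 ≤ y p) (p q₀ : Fin n) :
    y q₀ * T (Pi.single q₀ 1) p ≤ T y p := by
  rw [entry_expand T y p]
  exact Finset.single_le_sum (fun q _ => mul_nonneg (hy q) (hT p q)) (Finset.mem_univ q₀)

end M2

section M3
variable {n : ℕ}
local notation "EE" => ((Fin n) → ℝ)

variable {B : ℝ → ((Fin n) → ℝ) →L[ℝ] ((Fin n) → ℝ)} {LB : ℝ} (hB : Continuous B)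
  (hLB : ∀ s, ‖B s‖ ≤ LB)
  (hBpos : ∀ s (p q : Fin n), 0 ≤ B s (Pi.single q 1) p)

/-- entry evaluation as a CLM -/
noncomputable def entCLM (y : EE) (p : Fin n) : (EE →L[ℝ] EE) →L[ℝ] ℝ :=
  (ContinuousLinearMap.proj p).comp ((ContinuousLinearMap.apply ℝ EE) y)

@[simp] lemma entCLM_apply (y : EE) (p : Fin n) (T : EE →L[ℝ] EE) :
    entCLM y p T = T y p := rfl

include hB hBpos in
lemma pbSeq_app_nonneg (k : ℕ) :
    ∀ s, 0 ≤ s → ∀ y : EE, (∀ p, 0 ≤ y p) → ∀ p, 0 ≤ pbSeq B k s y p := by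
  induction k with
  | zero => intro s _ y hy p; exact hy p
  | succ k ih =>
    intro s hs y hy p
    have hint : IntervalIntegrable (fun τ => (B τ).comp (pbSeq B k τ)) MeasureTheory.volume 0 s :=
      (hB.clm_comp (pbSeq_cont hB k)).intervalIntegrable 0 s
    have h1 : pbSeq B (k+1) s y = ∫ τ in (0:ℝ)..s, ((B τ).comp (pbSeq B k τ)) y :=
      ContinuousLinearMap.intervalIntegral_apply hint y
    have hcont : Continuous fun τ => ((B τ).comp (pbSeq B k τ)) y :=
      (hB.clm_comp (pbSeq_cont hB k)).clm_apply continuous_const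
    have h2 : pbSeq B (k+1) s y p
        = ∫ τ in (0:ℝ)..s, (ContinuousLinearMap.proj (R := ℝ) (φ := fun _ : Fin n => ℝ) p)
            (((B τ).comp (pbSeq B k τ)) y) := by
      rw [h1]
      rw [ContinuousLinearMap.intervalIntegral_comp_comm _ (hcont.intervalIntegrable 0 s)]
      rfl
    rw [h2]
    apply intervalIntegral.integral_nonneg hs
    intro τ hτ
    exact entry_nonneg_apply (fun p' q' => hBpos τ p' q') (ih τ hτ.1 y hy) p

include hB hLB in
lemma pb_app_eq_tsum (s : ℝ) (y : EE) (p : Fin n) :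
    pb B s y p = ∑' k, pbSeq B k s y p := by
  have h := (entCLM y p).map_tsum (pbSeq_summable hB hLB (s := s))
  simpa [pb] using h

include hB hLB hBpos in
lemma pb_app_nonneg {s : ℝ} (hs : 0 ≤ s) {y : EE} (hy : ∀ p, 0 ≤ y p) (p : Fin n) :
    0 ≤ pb B s y p := by
  rw [pb_app_eq_tsum hB hLB]
  exact tsum_nonneg fun k => pbSeq_app_nonneg hB hBpos k s hs y hy p

include hB hLB in
lemma pb_entry_hasDerivAt (y : EE) (p : Fin n) (s : ℝ) :
    HasDerivAt (fun τ => pb B τ y p) ((B s) (pb B s y) p) s := by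
  have h := ((entCLM y p).hasFDerivAt (x := pb B s)).comp_hasDerivAt s
    (pb_hasDerivAt hB hLB s)
  simpa [Function.comp_def] using h

include hB hLB in
lemma pb_entry_cont (y : EE) (p : Fin n) : Continuous fun τ => (B τ) (pb B τ y) p :=
  (continuous_apply p).comp (hB.clm_apply ((pb_continuous hB hLB).clm_apply continuous_const))

include hB hLB in
lemma pb_entry_FTC (y : EE) (p : Fin n) (s₁ s₂ : ℝ) :
    pb B s₂ y p - pb B s₁ y p = ∫ τ in s₁..s₂, (B τ) (pb B τ y) p := by
  rw [intervalIntegral.integral_eq_sub_of_hasDerivAt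
    (fun τ _ => pb_entry_hasDerivAt hB hLB y p τ)
    ((pb_entry_cont hB hLB y p).intervalIntegrable s₁ s₂)]

include hB hLB hBpos in
lemma pb_entry_mono {s₁ s₂ : ℝ} (h0 : 0 ≤ s₁) (h12 : s₁ ≤ s₂) {y : EE} (hy : ∀ p, 0 ≤ y p)
    (p : Fin n) : pb B s₁ y p ≤ pb B s₂ y p := by
  have := pb_entry_FTC hB hLB y p s₁ s₂
  have hnn : 0 ≤ ∫ τ in s₁..s₂, (B τ) (pb B τ y) p := by
    apply intervalIntegral.integral_nonneg h12
    intro τ hτ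
    exact entry_nonneg_apply (fun p' q' => hBpos τ p' q')
      (fun p' => pb_app_nonneg hB hLB hBpos (h0.trans hτ.1) hy p') p
  linarith

end M3

section M4
variable {n : ℕ}
local notation "EE" => ((Fin n) → ℝ)

variable {B : ℝ → ((Fin n) → ℝ) →L[ℝ] ((Fin n) → ℝ)} {LB : ℝ} (hB : Continuous B)
  (hLB : ∀ s, ‖B s‖ ≤ LB)
  (hBpos : ∀ s (p q : Fin n), 0 ≤ B s (Pi.single q 1) p)

lemma single_nonneg' (j : Fin n) : ∀ p, 0 ≤ (Pi.single j 1 : EE) p := by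
  intro p
  rcases eq_or_ne p j with rfl | h
  · simp
  · simp [Pi.single_eq_of_ne h]

include hB hLB hBpos in
lemma pb_entry_pos {T : ℝ} (hT : 0 < T) (i j : Fin n)
    (hpath : Relation.ReflTransGen (fun a b => a ≠ b ∧ 0 < (B 0) (Pi.single b 1) a) i j) :
    ∀ s ∈ Ioc (0:ℝ) T, 0 < pb B s (Pi.single j 1) i := by
  induction hpath using Relation.ReflTransGen.head_induction_on with
  | refl =>
    intro s hs
    have h0 : pb B 0 (Pi.single j 1 : EE) j = 1 := by
      rw [pb_zero]; simp
    have := pb_entry_mono hB hLB hBpos le_rfl hs.1.le (single_nonneg' j) j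
    rw [h0] at this
    linarith
  | head hrel _ ih =>
    rename_i a c _
    obtain ⟨hac, hpos0⟩ := hrel
    intro s hs
    -- continuity at 0 of the edge entry
    have hgc : Continuous fun τ => (B τ) (Pi.single c 1 : EE) a :=
      (continuous_apply a).comp (hB.clm_apply continuous_const)
    have hev : ∀ᶠ τ in nhds 0, (B 0) (Pi.single c 1 : EE) a / 2 < (B τ) (Pi.single c 1 : EE) a := by
      have : Tendsto (fun τ => (B τ) (Pi.single c 1 : EE) a) (nhds 0) (nhds ((B 0) (Pi.single c 1 : EE) a)) :=
        hgc.continuousAt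
      exact this.eventually (eventually_gt_nhds (by linarith))
    rw [Metric.eventually_nhds_iff] at hev
    obtain ⟨ε, hε, hball⟩ := hev
    set m : ℝ := min s (ε/2) with hm
    have hm0 : 0 < m := lt_min hs.1 (by linarith)
    have hmT : m ≤ T := le_trans (min_le_left _ _) hs.2
    -- positivity at time m
    have hpos_m : 0 < pb B m (Pi.single j 1 : EE) a := by
      have hFTC := pb_entry_FTC hB hLB (Pi.single j 1 : EE) a 0 m
      have h0 : pb B 0 (Pi.single j 1 : EE) a = (Pi.single j 1 : EE) a := by rw [pb_zero]; rfl
      have hintpos : 0 < ∫ τ in (0:ℝ)..m, (B τ) (pb B τ (Pi.single j 1 : EE)) a := by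
        apply intervalIntegral.intervalIntegral_pos_of_pos_on
          ((pb_entry_cont hB hLB _ a).intervalIntegrable 0 m) _ hm0
        intro τ hτ
        have hτT : τ ∈ Ioc (0:ℝ) T := ⟨hτ.1, le_trans hτ.2.le hmT⟩
        have hyn : ∀ p, 0 ≤ pb B τ (Pi.single j 1 : EE) p :=
          fun p => pb_app_nonneg hB hLB hBpos hτ.1.le (single_nonneg' j) p
        have hedge : (B 0) (Pi.single c 1 : EE) a / 2 < (B τ) (Pi.single c 1 : EE) a := by
          apply hball
          rw [Real.dist_eq, sub_zero, abs_of_pos hτ.1]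
          calc τ < m := hτ.2
            _ ≤ ε/2 := min_le_right _ _
            _ < ε := by linarith
        have hc' : 0 < pb B τ (Pi.single j 1 : EE) c := ih τ hτT
        calc (0:ℝ) < pb B τ (Pi.single j 1 : EE) c * (B τ) (Pi.single c 1 : EE) a :=
              mul_pos hc' (lt_trans (by linarith) hedge)
          _ ≤ (B τ) (pb B τ (Pi.single j 1 : EE)) a :=
              entry_ge_single (fun p' q' => hBpos τ p' q') hyn a c
      have : 0 ≤ (Pi.single j 1 : EE) a := single_nonneg' j a
      linarith
    -- extend to s by monotonicity
    have := pb_entry_mono hB hLB hBpos hm0.le (min_le_left s (ε/2)) (single_nonneg' j) a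
    · exact lt_of_lt_of_le hpos_m this

omit hB hLB hBpos in
include hB in
lemma pb_conj {A : ℝ → ((Fin n) → ℝ) →L[ℝ] ((Fin n) → ℝ)} {L : ℝ}
    (hA : Continuous A) (hL : ∀ s, ‖A s‖ ≤ L)
    (hBdef : B = fun τ => A τ + L • ContinuousLinearMap.id ℝ ((Fin n) → ℝ))
    {T : ℝ} (hT : 0 ≤ T) :
    ∀ s ∈ Icc (0:ℝ) T, pb B s = Real.exp (L * s) • pb A s := by
  have hL0' : 0 ≤ L := hL0 hL
  have hLB' : ∀ s, ‖B s‖ ≤ 2 * L := by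
    intro s
    refine ContinuousLinearMap.opNorm_le_bound _ (by positivity) fun x => ?_
    rw [hBdef]
    simp only [ContinuousLinearMap.add_apply, ContinuousLinearMap.coe_smul', Pi.smul_apply,
      ContinuousLinearMap.coe_id', id_eq]
    calc ‖A s x + L • x‖ ≤ ‖A s x‖ + ‖L • x‖ := norm_add_le _ _
      _ ≤ L * ‖x‖ + L * ‖x‖ := by
          refine add_le_add (((A s).le_opNorm x).trans
            (mul_le_mul_of_nonneg_right (hL s) (norm_nonneg x))) ?_
          rw [norm_smul, Real.norm_eq_abs, abs_of_nonneg hL0']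
      _ = 2 * L * ‖x‖ := by ring
  set D : ℝ → EE →L[ℝ] EE := fun s => pb B s - Real.exp (L * s) • pb A s with hD
  have hD0 : D 0 = 0 := by
    rw [hD]
    simp only [mul_zero, Real.exp_zero, one_smul]
    rw [pb_zero, pb_zero]
    simp
  have hDderiv : ∀ s, HasDerivAt D ((B s).comp (D s)) s := by
    intro s
    have h1 := pb_hasDerivAt hB hLB' s
    have hc : HasDerivAt (fun s => Real.exp (L * s)) (Real.exp (L * s) * L) s := by
      simpa [Function.comp_def] using (Real.hasDerivAt_exp (L * s)).comp s ((hasDerivAt_id s).const_mul L)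
    have h2 := hc.smul (pb_hasDerivAt hA hL s)
    have h3 := h1.sub h2
    refine HasDerivAt.congr_deriv (f := D) h3 ?_
    ext x p
    simp only [hD, hBdef, ContinuousLinearMap.coe_comp', Function.comp_apply,
      ContinuousLinearMap.coe_sub', Pi.sub_apply, ContinuousLinearMap.add_apply,
      ContinuousLinearMap.coe_smul', Pi.smul_apply, ContinuousLinearMap.coe_id', id_eq,
      ContinuousLinearMap.add_comp, ContinuousLinearMap.smul_comp, ContinuousLinearMap.map_sub,
      map_smul, smul_eq_mul, ContinuousLinearMap.id_comp, Pi.add_apply, Pi.sub_apply,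
      Pi.smul_apply]
    ring
  have hgron : ∀ s ∈ Icc (0:ℝ) T, ‖D s‖ ≤ gronwallBound 0 (2*L) 0 (s - 0) := by
    apply norm_le_gronwallBound_of_norm_deriv_right_le
    · exact Continuous.continuousOn (continuous_iff_continuousAt.2 fun s => (hDderiv s).continuousAt)
    · exact fun x _ => (hDderiv x).hasDerivWithinAt
    · rw [hD0]; simp
    · intro x _
      calc ‖(B x).comp (D x)‖ ≤ ‖B x‖ * ‖D x‖ := ContinuousLinearMap.opNorm_comp_le _ _
        _ ≤ 2 * L * ‖D x‖ + 0 := by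
            rw [add_zero]
            exact mul_le_mul_of_nonneg_right (hLB' x) (norm_nonneg _)
  intro s hs
  have := hgron s hs
  rw [gronwallBound_ε0] at this
  simp only [zero_mul] at this
  have hD0' : D s = 0 := by
    rw [← norm_le_zero_iff]
    linarith
  have h4 : pb B s - Real.exp (L * s) • pb A s = 0 := hD0'
  exact sub_eq_zero.1 h4

end M4
open Pointwise

/-- Strong connectivity of the directed graph of a matrix (irreducibility). -/
def MatrixIrreducible {n : ℕ} (M : Matrix (Fin n) (Fin n) ℝ) : Prop :=
  ∀ i j : Fin n, Relation.ReflTransGen (fun a b => a ≠ b ∧ M a b ≠ 0) i j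

set_option maxHeartbeats 2000000 in
theorem stmt15 {n : ℕ}
    (F : (Fin n → ℝ) → (Fin n → ℝ))
    (V : Set (Fin n → ℝ)) (hV : IsOpen V)
    (hF : ContDiffOn ℝ 1 F V)
    (hMetzler : ∀ z ∈ V, ∀ i j : Fin n, i ≠ j → 0 ≤ fderiv ℝ F z (Pi.single j 1) i)
    (hirr : ∀ z ∈ V, MatrixIrreducible (Matrix.of fun i j => fderiv ℝ F z (Pi.single j 1) i))
    (φ : ℝ → (Fin n → ℝ) → (Fin n → ℝ))
    (hφ0 : ∀ z, φ 0 z = z)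
    (hφ : ∀ z ∈ V, ∀ t : ℝ, HasDerivAt (fun s => φ s z) (F (φ t z)) t)
    (S : Set (Fin n → ℝ)) (hS : IsCompact S) (hSV : S ⊆ V)
    (hSinv : ∀ t : ℝ, 0 ≤ t → ∀ z ∈ S, φ t z ∈ S) :
    ∃ t₀ > (0 : ℝ), ∀ t ≥ t₀, ∀ z ∈ S,
      DifferentiableAt ℝ (φ t) z ∧
      ∀ i j : Fin n, 0 < fderiv ℝ (φ t) z (Pi.single j 1) i := by
  refine ⟨1, one_pos, fun t ht z hz => ?_⟩
  have hT0 : (0:ℝ) < t := lt_of_lt_of_le one_pos ht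
  have hzV : z ∈ V := hSV hz
  -- the base trajectory
  set u : ℝ → (Fin n → ℝ) := fun s => φ s z with hu_def
  have hu : ∀ s, HasDerivAt u (F (u s)) s := hφ z hzV
  have hucont : Continuous u := continuous_iff_continuousAt.2 fun s => (hu s).continuousAt
  have hu0 : u 0 = z := hφ0 z
  have huS : ∀ s ∈ Set.Icc (0:ℝ) t, u s ∈ S := fun s hs => hSinv s hs.1 z hz
  have huV : ∀ s ∈ Set.Icc (0:ℝ) t, u s ∈ V := fun s hs => hSV (huS s hs)
  -- clamp
  set cl : ℝ → ℝ := fun s => max 0 (min s t) with hcl_def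
  have hcl_cont : Continuous cl := continuous_const.max (continuous_id.min continuous_const)
  have hcl_mem : ∀ s, cl s ∈ Set.Icc (0:ℝ) t :=
    fun s => ⟨le_max_left _ _, max_le hT0.le (min_le_right _ _)⟩
  have hcl_eq : ∀ s ∈ Set.Icc (0:ℝ) t, cl s = s := by
    intro s hs
    rw [hcl_def]
    simp only [min_eq_left hs.2, max_eq_right hs.1]
  set uc : ℝ → (Fin n → ℝ) := fun s => u (cl s) with huc_def
  have huc_cont : Continuous uc := hucont.comp hcl_cont
  have hucV : ∀ s, uc s ∈ V := fun s => huV _ (hcl_mem s)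
  -- compact image and tube
  set C : Set (Fin n → ℝ) := u '' Set.Icc 0 t with hC_def
  have hCcpt : IsCompact C := isCompact_Icc.image hucont
  have hCV : C ⊆ V := by
    rintro y ⟨s, hs, rfl⟩
    exact huV s hs
  obtain ⟨δK, hδK, hthick⟩ := hCcpt.exists_thickening_subset_open hV hCV
  set r : ℝ := δK / 2 with hr_def
  have hr0 : 0 < r := by positivity
  have hrV : ∀ y : Fin n → ℝ, (∃ s ∈ Set.Icc (0:ℝ) t, dist y (u s) ≤ r) → y ∈ V := by
    rintro y ⟨s, hs, hd⟩
    apply hthick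
    rw [Metric.mem_thickening_iff]
    exact ⟨u s, ⟨s, hs, rfl⟩, lt_of_le_of_lt hd (by rw [hr_def]; linarith)⟩
  set K : Set (Fin n → ℝ) := C + Metric.closedBall (0 : Fin n → ℝ) r with hK_def
  have hKcpt : IsCompact K := hCcpt.add (isCompact_closedBall (0 : Fin n → ℝ) r)
  have hmemK : ∀ s ∈ Set.Icc (0:ℝ) t, ∀ y : Fin n → ℝ, dist y (u s) ≤ r → y ∈ K := by
    intro s hs y hd
    rw [hK_def]
    refine Set.mem_add.2 ⟨u s, ⟨s, hs, rfl⟩, y - u s, ?_, by abel⟩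
    rw [Metric.mem_closedBall, dist_zero_right]
    rwa [dist_eq_norm] at hd
  have hKV : K ⊆ V := by
    rintro y hy
    rw [hK_def] at hy
    obtain ⟨a, ha, b, hb, rfl⟩ := Set.mem_add.1 hy
    obtain ⟨s, hs, rfl⟩ := ha
    refine hrV _ ⟨s, hs, ?_⟩
    rw [Metric.mem_closedBall, dist_zero_right] at hb
    rw [dist_eq_norm]
    simpa using hb
  have hCK : C ⊆ K := by
    intro y hy
    rw [hK_def]
    exact Set.mem_add.2 ⟨y, hy, 0, by simp [hr0.le], by simp⟩
  -- derivative bounds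
  have hFdiff : ∀ y ∈ V, DifferentiableAt ℝ F y :=
    fun y hy => (hF.differentiableOn one_ne_zero).differentiableAt (hV.mem_nhds hy)
  have hcontfd : ContinuousOn (fderiv ℝ F) V := hF.continuousOn_fderiv_of_isOpen hV le_rfl
  obtain ⟨L₀, hL₀⟩ := hKcpt.exists_bound_of_continuousOn (hcontfd.mono hKV)
  set L : ℝ := max L₀ 1 with hL_def
  have hL0' : (0:ℝ) < L := lt_of_lt_of_le one_pos (le_max_right _ _)
  have hLK : ∀ y ∈ K, ‖fderiv ℝ F y‖ ≤ L := fun y hy => (hL₀ y hy).trans (le_max_left _ _)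
  -- fiber Lipschitz bound
  have hlip : ∀ s ∈ Set.Icc (0:ℝ) t, ∀ x y : Fin n → ℝ, dist x (u s) ≤ r → dist y (u s) ≤ r →
      ‖F x - F y‖ ≤ L * ‖x - y‖ := by
    intro s hs x y hx hy
    have hdiff : ∀ p ∈ Metric.closedBall (u s) r, DifferentiableAt ℝ F p :=
      fun p hp => hFdiff p (hrV p ⟨s, hs, Metric.mem_closedBall.1 hp⟩)
    have hbd : ∀ p ∈ Metric.closedBall (u s) r, ‖fderiv ℝ F p‖ ≤ L :=
      fun p hp => hLK p (hmemK s hs p (Metric.mem_closedBall.1 hp))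
    exact Convex.norm_image_sub_le_of_norm_fderiv_le hdiff hbd (convex_closedBall _ _)
      (Metric.mem_closedBall.2 hy) (Metric.mem_closedBall.2 hx)
  -- the variational coefficient
  set A : ℝ → (Fin n → ℝ) →L[ℝ] (Fin n → ℝ) := fun s => fderiv ℝ F (uc s) with hA_def
  have hAcont : Continuous A := hcontfd.comp_continuous huc_cont hucV
  have hucK : ∀ s, uc s ∈ K := by
    intro s
    exact hCK ⟨cl s, hcl_mem s, rfl⟩
  have hAL : ∀ s, ‖A s‖ ≤ L := fun s => hLK _ (hucK s)
  have hAu : ∀ s ∈ Set.Icc (0:ℝ) t, A s = fderiv ℝ F (u s) := by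
    intro s hs
    rw [hA_def]
    simp only [huc_def, hcl_eq s hs]
  -- uniform differentiability on the tube
  have hunif : ∀ ε > (0:ℝ), ∃ ρ, 0 < ρ ∧ ρ ≤ r ∧ ∀ s ∈ Set.Icc (0:ℝ) t, ∀ y : Fin n → ℝ,
      ‖y - u s‖ ≤ ρ → ‖F y - F (u s) - (A s) (y - u s)‖ ≤ ε * ‖y - u s‖ := by
    intro ε hε
    have huck := hKcpt.uniformContinuousOn_of_continuous (hcontfd.mono hKV)
    rw [Metric.uniformContinuousOn_iff] at huck
    obtain ⟨δ₀, hδ₀, hδ⟩ := huck ε hε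
    refine ⟨min r (δ₀/2), lt_min hr0 (by positivity), min_le_left _ _, ?_⟩
    intro s hs y hy
    set ρ' : ℝ := min r (δ₀/2) with hρ'_def
    have hρ'r : ρ' ≤ r := min_le_left _ _
    have hballK : ∀ x ∈ Metric.closedBall (u s) ρ', x ∈ K :=
      fun x hx => hmemK s hs x (le_trans (Metric.mem_closedBall.1 hx) hρ'r)
    have hdiff : ∀ x ∈ Metric.closedBall (u s) ρ', DifferentiableAt ℝ F x :=
      fun x hx => hFdiff x (hKV (hballK x hx))
    have hgdiff : ∀ x ∈ Metric.closedBall (u s) ρ',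
        DifferentiableAt ℝ (fun p => F p - (A s) p) x :=
      fun x hx => (hdiff x hx).sub (A s).differentiableAt
    have hgfder : ∀ x ∈ Metric.closedBall (u s) ρ',
        ‖fderiv ℝ (fun p => F p - (A s) p) x‖ ≤ ε := by
      intro x hx
      rw [fderiv_fun_sub (hdiff x hx) (A s).differentiableAt, (A s).fderiv, hAu s hs]
      have hd : dist x (u s) < δ₀ :=
        lt_of_le_of_lt (le_trans (Metric.mem_closedBall.1 hx) (min_le_right _ _)) (by linarith)
      have := hδ x (hballK x hx) (u s) (hmemK s hs (u s) (by simp [hr0.le]))  hd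
      rw [dist_eq_norm] at this
      exact this.le
    have husmem : u s ∈ Metric.closedBall (u s) ρ' :=
      Metric.mem_closedBall_self (le_min hr0.le (by positivity))
    have hymem : y ∈ Metric.closedBall (u s) ρ' := by
      rw [Metric.mem_closedBall, dist_eq_norm]; exact hy
    have hmvt := Convex.norm_image_sub_le_of_norm_fderiv_le hgdiff hgfder
      (convex_closedBall _ _) husmem hymem
    have heq : F y - F (u s) - (A s) (y - u s)
        = (F y - (A s) y) - (F (u s) - (A s) (u s)) := by
      rw [map_sub]; abel
    rw [heq]
    exact hmvt
  -- trajectory comparison via Gronwall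
  have hcompare : ∀ w ∈ V, ∀ ρ : ℝ, 0 < ρ → ρ ≤ r → ‖w - z‖ ≤ ρ/2 * Real.exp (-(L*t)) →
      ∀ s ∈ Set.Icc (0:ℝ) t,
        ‖φ s w - u s‖ ≤ ‖w - z‖ * Real.exp (L * s) ∧ ‖φ s w - u s‖ ≤ ρ := by
    intro w hwV ρ hρ0 hρr hwz
    set v : ℝ → (Fin n → ℝ) := fun s => φ s w with hv_def
    have hv : ∀ s, HasDerivAt v (F (v s)) s := hφ w hwV
    set g : ℝ → (Fin n → ℝ) := fun s => v s - u s with hg_def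
    have hg : ∀ s, HasDerivAt g (F (v s) - F (u s)) s := fun s => (hv s).sub (hu s)
    have hgcont : Continuous g := continuous_iff_continuousAt.2 fun s => (hg s).continuousAt
    have hg0 : ‖g 0‖ = ‖w - z‖ := by
      simp only [hg_def, hv_def, hu_def, hφ0]
    have key : ∀ b ∈ Set.Icc (0:ℝ) t, (∀ τ ∈ Set.Ico (0:ℝ) b, ‖g τ‖ ≤ ρ) →
        ∀ s ∈ Set.Icc (0:ℝ) b, ‖g s‖ ≤ ‖w - z‖ * Real.exp (L * s) := by
      intro b hb hbd s hs
      have hgr := norm_le_gronwallBound_of_norm_deriv_right_le (f := g)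
        (f' := fun τ => F (v τ) - F (u τ)) (δ := ‖w - z‖) (K := L) (ε := 0) (a := 0) (b := b)
        hgcont.continuousOn (fun x _ => (hg x).hasDerivWithinAt) (le_of_eq hg0) ?_ s hs
      · rwa [sub_zero, gronwallBound_ε0] at hgr
      · intro x hx
        have hxt : x ∈ Set.Icc (0:ℝ) t := ⟨hx.1, le_trans hx.2.le hb.2⟩
        have h1 : dist (v x) (u x) ≤ r := by
          rw [dist_eq_norm]
          exact le_trans (hbd x hx) hρr
        have h2 : dist (u x) (u x) ≤ r := by simp [hr0.le]
        rw [add_zero]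
        exact hlip x hxt (v x) (u x) h1 h2
    have hexp1 : Real.exp (-(L*t)) ≤ 1 := Real.exp_le_one_iff.2 (by nlinarith)
    have hnotbad : ∀ s ∈ Set.Icc (0:ℝ) t, ‖g s‖ < ρ := by
      by_contra hcon
      push_neg at hcon
      obtain ⟨s₀, hs₀, hs₀ρ⟩ := hcon
      set bad : Set ℝ := {s | s ∈ Set.Icc (0:ℝ) t ∧ ρ ≤ ‖g s‖} with hbad_def
      have hbadclosed : IsClosed bad :=
        (isClosed_Icc.inter (isClosed_le continuous_const hgcont.norm))
      have hbadcpt : IsCompact bad :=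
        isCompact_Icc.of_isClosed_subset hbadclosed (fun x hx => hx.1)
      obtain ⟨s₁, hs₁bad, hleast⟩ := hbadcpt.exists_isLeast ⟨s₀, hs₀, hs₀ρ⟩
      have hs₁0 : 0 < s₁ := by
        rcases lt_or_eq_of_le hs₁bad.1.1 with h | h
        · exact h
        · exfalso
          have := hs₁bad.2
          rw [← h, hg0] at this
          nlinarith [Real.exp_pos (-(L*t))]
      have hbefore : ∀ τ ∈ Set.Ico (0:ℝ) s₁, ‖g τ‖ ≤ ρ := by
        intro τ hτ
        by_contra hcon2
        push_neg at hcon2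
        have : τ ∈ bad := ⟨⟨hτ.1, le_trans hτ.2.le hs₁bad.1.2⟩, hcon2.le⟩
        exact absurd (hleast this) (not_le.2 hτ.2)
      have hb := key s₁ hs₁bad.1 hbefore s₁ ⟨hs₁0.le, le_rfl⟩
      have hst : Real.exp (L * s₁) ≤ Real.exp (L * t) :=
        Real.exp_le_exp.2 (mul_le_mul_of_nonneg_left hs₁bad.1.2 hL0'.le)
      have hmul : Real.exp (-(L*t)) * Real.exp (L * s₁) ≤ 1 := by
        rw [← Real.exp_add]
        apply Real.exp_le_one_iff.2
        nlinarith [hs₁bad.1.2]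
      have : ‖g s₁‖ ≤ ρ/2 := by
        calc ‖g s₁‖ ≤ ‖w - z‖ * Real.exp (L * s₁) := hb
          _ ≤ (ρ/2 * Real.exp (-(L*t))) * Real.exp (L * s₁) :=
              mul_le_mul_of_nonneg_right hwz (Real.exp_pos _).le
          _ = ρ/2 * (Real.exp (-(L*t)) * Real.exp (L * s₁)) := by ring
          _ ≤ ρ/2 * 1 := mul_le_mul_of_nonneg_left hmul (by positivity)
          _ = ρ/2 := by ring
      have := hs₁bad.2
      linarith
    intro s hs
    refine ⟨key t ⟨hT0.le, le_rfl⟩ (fun τ hτ => (hnotbad τ ⟨hτ.1, hτ.2.le⟩).le) s hs,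
      (hnotbad s hs).le⟩
  -- the derivative of the flow
  have hfder : HasFDerivAt (φ t) (pb A t) z := by
    rw [hasFDerivAt_iff_isLittleO_nhds_zero, Asymptotics.isLittleO_iff]
    intro c hc
    set ε₁ : ℝ := c * L * Real.exp (-(2*L*t)) with hε₁_def
    have hε₁0 : 0 < ε₁ := by positivity
    obtain ⟨ρ, hρ0, hρr, hρ⟩ := hunif ε₁ hε₁0
    set δ₂ : ℝ := min (ρ/2 * Real.exp (-(L*t))) r with hδ₂_def
    have hδ₂0 : 0 < δ₂ := lt_min (by positivity) hr0
    filter_upwards [Metric.closedBall_mem_nhds (0 : Fin n → ℝ) hδ₂0] with h hh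
    rw [Metric.mem_closedBall, dist_zero_right] at hh
    set w : Fin n → ℝ := z + h with hw_def
    have hwz : w - z = h := by rw [hw_def]; abel
    have hwV : w ∈ V := by
      refine hrV w ⟨0, ⟨le_rfl, hT0.le⟩, ?_⟩
      rw [hu0, dist_eq_norm, hwz]
      exact hh.trans (min_le_right _ _)
    have hwznorm : ‖w - z‖ ≤ ρ/2 * Real.exp (-(L*t)) := by
      rw [hwz]
      exact le_trans hh (min_le_left _ _)
    have hcomp := hcompare w hwV ρ hρ0 hρr hwznorm
    set v : ℝ → (Fin n → ℝ) := fun s => φ s w with hv_def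
    have hv : ∀ s, HasDerivAt v (F (v s)) s := hφ w hwV
    set Rm : ℝ → (Fin n → ℝ) := fun s => v s - u s - pb A s h with hRm_def
    have hRd : ∀ s, HasDerivAt Rm (F (v s) - F (u s) - (A s) (pb A s h)) s := by
      intro s
      have h1 : HasDerivAt (fun s => pb A s h) ((A s) (pb A s h)) s := by
        have := ((ContinuousLinearMap.apply ℝ (Fin n → ℝ) h).hasFDerivAt
          (x := pb A s)).comp_hasDerivAt s (pb_hasDerivAt hAcont hAL s)
        simpa [Function.comp_def] using this
      exact ((hv s).sub (hu s)).sub h1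
    have hRcont : Continuous Rm :=
      continuous_iff_continuousAt.2 fun s => (hRd s).continuousAt
    have hR0 : Rm 0 = 0 := by
      rw [hRm_def]
      simp only [hv_def, hφ0 w, hu0, pb_zero]
      simp [hw_def]
    have hgron : ∀ s ∈ Set.Icc (0:ℝ) t,
        ‖Rm s‖ ≤ gronwallBound 0 L (ε₁ * Real.exp (L*t) * ‖h‖) (s - 0) := by
      apply norm_le_gronwallBound_of_norm_deriv_right_le hRcont.continuousOn
        (fun x _ => (hRd x).hasDerivWithinAt) (by rw [hR0]; simp)
      intro x hx
      have hxt : x ∈ Set.Icc (0:ℝ) t := ⟨hx.1, hx.2.le⟩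
      obtain ⟨hb1, hb2⟩ := hcomp x hxt
      have hvu : ‖v x - u x‖ ≤ ρ := hb2
      have hbr := hρ x hxt (v x) hvu
      have hsplit : F (v x) - F (u x) - (A x) (pb A x h)
          = (F (v x) - F (u x) - (A x) (v x - u x)) + (A x) (Rm x) := by
        rw [hRm_def]
        simp only [map_sub]
        abel
      rw [hsplit]
      have hexpmono : Real.exp (L * x) ≤ Real.exp (L * t) :=
        Real.exp_le_exp.2 (mul_le_mul_of_nonneg_left hx.2.le hL0'.le)
      calc ‖(F (v x) - F (u x) - (A x) (v x - u x)) + (A x) (Rm x)‖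
          ≤ ‖F (v x) - F (u x) - (A x) (v x - u x)‖ + ‖(A x) (Rm x)‖ := norm_add_le _ _
        _ ≤ ε₁ * ‖v x - u x‖ + ‖A x‖ * ‖Rm x‖ :=
            add_le_add hbr ((A x).le_opNorm _)
        _ ≤ ε₁ * (‖w - z‖ * Real.exp (L * x)) + L * ‖Rm x‖ := by
            refine add_le_add (mul_le_mul_of_nonneg_left hb1 hε₁0.le) ?_
            exact mul_le_mul_of_nonneg_right (hAL x) (norm_nonneg _)
        _ ≤ L * ‖Rm x‖ + ε₁ * Real.exp (L*t) * ‖h‖ := by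
            rw [hwz]
            have : ε₁ * (‖h‖ * Real.exp (L * x)) ≤ ε₁ * Real.exp (L*t) * ‖h‖ := by
              rw [mul_comm (‖h‖) (Real.exp (L*x)), ← mul_assoc]
              apply mul_le_mul_of_nonneg_right _ (norm_nonneg h)
              exact mul_le_mul_of_nonneg_left hexpmono hε₁0.le
            linarith
    have hRt := hgron t ⟨hT0.le, le_rfl⟩
    rw [sub_zero, gronwallBound_of_K_ne_0 (ne_of_gt hL0')] at hRt
    have hfinal : 0 * Real.exp (L * t) + ε₁ * Real.exp (L*t) * ‖h‖ / L * (Real.exp (L * t) - 1)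
        ≤ c * ‖h‖ := by
      rw [hε₁_def]
      have hprod : Real.exp (-(2*L*t)) * Real.exp (L*t) * Real.exp (L*t) = 1 := by
        rw [← Real.exp_add, ← Real.exp_add]
        have he : -(2*L*t) + L*t + L*t = 0 := by ring
        rw [he, Real.exp_zero]
      have hq0 : 0 ≤ Real.exp (-(2*L*t)) * Real.exp (L*t) := by positivity
      have hkey : Real.exp (-(2*L*t)) * Real.exp (L*t) * (Real.exp (L*t) - 1)
          = 1 - Real.exp (-(2*L*t)) * Real.exp (L*t) := by linear_combination hprod
      rw [zero_mul, zero_add]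
      have heq2 : c * L * Real.exp (-(2*L*t)) * Real.exp (L*t) * ‖h‖ / L * (Real.exp (L*t) - 1)
          = c * ‖h‖ * (Real.exp (-(2*L*t)) * Real.exp (L*t) * (Real.exp (L*t) - 1)) := by
        field_simp
      rw [heq2, hkey]
      have hch : 0 ≤ c * ‖h‖ := mul_nonneg hc.le (norm_nonneg h)
      nlinarith [hq0]
    calc ‖φ t (z + h) - φ t z - (pb A t) h‖ = ‖Rm t‖ := by rw [hRm_def]
      _ ≤ _ := hRt
      _ ≤ c * ‖h‖ := hfinal
  -- differentiability established; now positivity of entries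
  have hdiffat : DifferentiableAt ℝ (φ t) z := hfder.differentiableAt
  have hfdeq : fderiv ℝ (φ t) z = pb A t := hfder.fderiv
  refine ⟨hdiffat, ?_⟩
  intro i j
  -- the shifted nonnegative system
  set Bm : ℝ → (Fin n → ℝ) →L[ℝ] (Fin n → ℝ) :=
    fun s => A s + L • ContinuousLinearMap.id ℝ (Fin n → ℝ) with hBm_def
  have hBmc : Continuous Bm := hAcont.add continuous_const
  have hBmL : ∀ s, ‖Bm s‖ ≤ 2 * L := by
    intro s
    refine ContinuousLinearMap.opNorm_le_bound _ (by positivity) fun x => ?_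
    rw [hBm_def]
    simp only [ContinuousLinearMap.add_apply, ContinuousLinearMap.coe_smul', Pi.smul_apply,
      ContinuousLinearMap.coe_id', id_eq]
    calc ‖(A s) x + L • x‖ ≤ ‖(A s) x‖ + ‖L • x‖ := norm_add_le _ _
      _ ≤ L * ‖x‖ + L * ‖x‖ := by
          refine add_le_add (((A s).le_opNorm x).trans
            (mul_le_mul_of_nonneg_right (hAL s) (norm_nonneg x))) ?_
          rw [norm_smul, Real.norm_eq_abs, abs_of_nonneg hL0'.le]
      _ = 2 * L * ‖x‖ := by ring
  have hsingle1 : ∀ q : Fin n, ‖(Pi.single q 1 : Fin n → ℝ)‖ = 1 := by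
    intro q
    rw [Pi.norm_single]
    simp
  have hBmpos : ∀ s (p q : Fin n), 0 ≤ (Bm s) (Pi.single q 1) p := by
    intro s p q
    rw [hBm_def]
    simp only [ContinuousLinearMap.add_apply, ContinuousLinearMap.coe_smul', Pi.smul_apply,
      ContinuousLinearMap.coe_id', id_eq]
    rcases eq_or_ne p q with rfl | hpq
    · have habs : |(A s) (Pi.single p 1) p| ≤ L := by
        calc |(A s) (Pi.single p 1) p| = ‖(A s) (Pi.single p 1) p‖ := rfl
          _ ≤ ‖(A s) (Pi.single p 1)‖ := norm_le_pi_norm _ p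
          _ ≤ ‖A s‖ * ‖(Pi.single p 1 : Fin n → ℝ)‖ := (A s).le_opNorm _
          _ ≤ L * 1 := by
              rw [hsingle1]
              exact mul_le_mul_of_nonneg_right (hAL s) zero_le_one
          _ = L := mul_one L
      have h1 : (L • (Pi.single p 1 : Fin n → ℝ)) p = L := by
        simp [Pi.smul_apply]
      rw [Pi.add_apply, h1]
      have := neg_abs_le ((A s) (Pi.single p 1) p)
      linarith
    · have h0 : (L • (Pi.single q 1 : Fin n → ℝ)) p = 0 := by
        simp [Pi.smul_apply, Pi.single_eq_of_ne hpq]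
      rw [Pi.add_apply, h0, add_zero]
      exact hMetzler (uc s) (hucV s) p q hpq
  have hconj := pb_conj hBmc hAcont hAL hBm_def hT0.le
  -- edge relation transfer
  have hA0 : A 0 = fderiv ℝ F z := by
    rw [hA_def]
    have : cl 0 = 0 := hcl_eq 0 ⟨le_rfl, hT0.le⟩
    simp only [huc_def, this, hu0]
  have hedge : Relation.ReflTransGen
      (fun a b => a ≠ b ∧ 0 < (Bm 0) (Pi.single b 1) a) i j := by
    apply Relation.ReflTransGen.mono ?_ i j (hirr z hzV i j)
    intro a b hab
    obtain ⟨hne, hM⟩ := hab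
    refine ⟨hne, ?_⟩
    have hval : (Bm 0) (Pi.single b 1) a = fderiv ℝ F z (Pi.single b 1) a := by
      rw [hBm_def]
      simp only [ContinuousLinearMap.add_apply, ContinuousLinearMap.coe_smul', Pi.smul_apply,
        ContinuousLinearMap.coe_id', id_eq, hA0]
      have h0 : (L • (Pi.single b 1 : Fin n → ℝ)) a = 0 := by
        simp [Pi.smul_apply, Pi.single_eq_of_ne hne]
      rw [Pi.add_apply, h0, add_zero]
    rw [hval]
    have hnn := hMetzler z hzV a b hne
    have hne0 : fderiv ℝ F z (Pi.single b 1) a ≠ 0 := by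
      simpa [Matrix.of_apply] using hM
    exact lt_of_le_of_ne hnn (Ne.symm hne0)
  have hpos := pb_entry_pos hBmc hBmL hBmpos hT0 i j hedge t ⟨hT0, le_rfl⟩
  have hconjt := hconj t ⟨hT0.le, le_rfl⟩
  rw [hconjt] at hpos
  have hposΨ : 0 < (pb A t) (Pi.single j 1) i := by
    have hexp := Real.exp_pos (L * t)
    have : (Real.exp (L * t) • pb A t) (Pi.single j 1) i
        = Real.exp (L * t) * (pb A t) (Pi.single j 1) i := by
      simp [ContinuousLinearMap.coe_smul', Pi.smul_apply, smul_eq_mul]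
    rw [this] at hpos
    nlinarith
  rw [hfdeq]
  exact hposΨ
end
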